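/- For all integers n, j, k with 0 ≤ j ≤ n and k ≥ 0, one has 0 ≤ 1 − C(n,j)/C(n+k,j) ≤ kj/(n−j+1), where C(a,b) denotes the binomial coefficient. -/

import Mathlib

/-!
Writing `r m = C(n,j)/C(m,j)`, one step `m → m + 1` multiplies `r` by
`C(m,j)/C(m+1,j) = 1 - j/(m+1)`, and `1 - xy ≤ (1 - x) + (1 - y)` for `x, y ≤ 1`.
Hence `1 - r (n+k)` is at most `∑_{i<k} j/(n+i+1)`, and each term is at most `j/(n-j+1)`.
-/

open Finset

lemma one_sub_mul_le_add_one_sub {x y : ℝ} (hx : x ≤ 1) (hy : y ≤ 1) :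
    1 - x * y ≤ (1 - x) + (1 - y) := by
  nlinarith [mul_nonneg (sub_nonneg.2 hx) (sub_nonneg.2 hy)]

namespace Nat

lemma cast_choose_div_cast_choose_le_one {n m : ℕ} (j : ℕ) (h : n ≤ m) :
    (n.choose j : ℝ) / m.choose j ≤ 1 :=
  div_le_one_of_le₀ (mod_cast choose_le_choose j h) (Nat.cast_nonneg _)

lemma one_sub_cast_choose_div_cast_choose_succ {m j : ℕ} (hj : j ≤ m + 1) :
    1 - (m.choose j : ℝ) / (m + 1).choose j = j / (m + 1) := by
  have hpos : (0 : ℝ) < (m + 1).choose j := mod_cast choose_pos hj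
  have hrec : (m.choose j : ℝ) * (m + 1) = (m + 1).choose j * (m + 1 - j) := by
    exact_mod_cast choose_mul_succ_eq m j
  field_simp
  linarith

lemma one_sub_cast_choose_div_cast_choose_add_le_sum {n j : ℕ} (hj : j ≤ n) (k : ℕ) :
    1 - (n.choose j : ℝ) / (n + k).choose j ≤ ∑ i ∈ range k, (j : ℝ) / (n + i + 1) := by
  induction k with
  | zero =>
    have hpos : (0 : ℝ) < n.choose j := mod_cast choose_pos hj
    simp [hpos.ne']
  | succ k ih =>
    have hchain : (n.choose j : ℝ) / (n + (k + 1)).choose j =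
        (n.choose j : ℝ) / (n + k).choose j * (((n + k).choose j : ℝ) / (n + k + 1).choose j) := by
      have hpos : (0 : ℝ) < (n + k).choose j := mod_cast choose_pos (by omega)
      rw [← add_assoc, div_mul_div_cancel₀ hpos.ne']
    have hstep := one_sub_cast_choose_div_cast_choose_succ (m := n + k) (j := j) (by omega)
    push_cast at hstep
    rw [hchain, sum_range_succ]
    calc _ ≤ (1 - (n.choose j : ℝ) / (n + k).choose j)
            + (1 - ((n + k).choose j : ℝ) / (n + k + 1).choose j) :=
          one_sub_mul_le_add_one_sub (cast_choose_div_cast_choose_le_one j (by omega))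
            (cast_choose_div_cast_choose_le_one j (by omega))
      _ ≤ _ := by rw [hstep]; gcongr

end Nat

/-- For integers `0 ≤ j ≤ n` and `k ≥ 0`,
`0 ≤ 1 − C(n,j)/C(n+k,j) ≤ k j/(n−j+1)`. -/
theorem binom_ratio_bounds (n j k : ℕ) (hj : j ≤ n) :
    0 ≤ 1 - (n.choose j : ℝ) / ((n + k).choose j) ∧
    1 - (n.choose j : ℝ) / ((n + k).choose j) ≤
      (k : ℝ) * j / ((n : ℝ) - j + 1) := by
  refine ⟨sub_nonneg.2 (Nat.cast_choose_div_cast_choose_le_one j (by omega)), ?_⟩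
  have hjn : (j : ℝ) ≤ n := mod_cast hj
  have hterm : ∀ i ∈ range k, (j : ℝ) / (n + i + 1) ≤ j / (n - j + 1) := fun i _ => by
    gcongr
    linarith
  calc _ ≤ ∑ i ∈ range k, (j : ℝ) / (n + i + 1) :=
        Nat.one_sub_cast_choose_div_cast_choose_add_le_sum hj k
    _ ≤ k • ((j : ℝ) / (n - j + 1)) := by simpa using sum_le_card_nsmul _ _ _ hterm
    _ = _ := by rw [nsmul_eq_mul, mul_div_assoc]
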